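/- arXiv:2301.02495 — 2 statements merged into one kernel-verified Lean document; each statement's English description precedes it below -/
import Mathlib

section
/- Let u, v : ℝ×ℝ → ℝ be smooth solutions of the Geng–Xue system with m = u − u_xx > 0 and n = v − v_xx > 0 everywhere. Then q := (m n)^{1/3} satisfies the conservation law q_t = (−u v q)_x. -/
open Matrix

noncomputable def pdx (f : ℝ → ℝ → ℝ) : ℝ → ℝ → ℝ := fun x t => deriv (fun x' => f x' t) x

noncomputable def pdt (f : ℝ → ℝ → ℝ) : ℝ → ℝ → ℝ := fun x t => deriv (fun t' => f x t') t

def Smooth2 (f : ℝ → ℝ → ℝ) : Prop := ContDiff ℝ (⊤ : ℕ∞) (Function.uncurry f)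

noncomputable def mDef (u : ℝ → ℝ → ℝ) : ℝ → ℝ → ℝ := fun x t => u x t - pdx (pdx u) x t

/-- The Geng–Xue system. -/
def GXeq (u v : ℝ → ℝ → ℝ) : Prop :=
  ∀ x t : ℝ,
    pdt (mDef u) x t + 3 * pdx u x t * v x t * mDef u x t
      + u x t * v x t * pdx (mDef u) x t = 0 ∧
    pdt (mDef v) x t + 3 * pdx v x t * u x t * mDef v x t
      + u x t * v x t * pdx (mDef v) x t = 0

lemma hasDerivAt_fst (f : ℝ → ℝ → ℝ) (hf : Smooth2 f) (x t : ℝ) :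
    HasDerivAt (fun x' => f x' t) (fderiv ℝ (Function.uncurry f) (x, t) (1, 0)) x := by
  have hF := (hf.differentiable (by simp) (x, t)).hasFDerivAt
  have hg : HasDerivAt (fun x' : ℝ => ((x', t) : ℝ × ℝ)) ((1 : ℝ), (0 : ℝ)) x :=
    HasDerivAt.prodMk (hasDerivAt_id x) (hasDerivAt_const x t)
  exact hF.comp_hasDerivAt x hg

lemma hasDerivAt_snd (f : ℝ → ℝ → ℝ) (hf : Smooth2 f) (x t : ℝ) :
    HasDerivAt (fun t' => f x t') (fderiv ℝ (Function.uncurry f) (x, t) (0, 1)) t := by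
  have hF := (hf.differentiable (by simp) (x, t)).hasFDerivAt
  have hg : HasDerivAt (fun t' : ℝ => ((x, t') : ℝ × ℝ)) ((0 : ℝ), (1 : ℝ)) t :=
    HasDerivAt.prodMk (hasDerivAt_const t x) (hasDerivAt_id t)
  exact hF.comp_hasDerivAt t hg

lemma hasDerivAt_pdx (f : ℝ → ℝ → ℝ) (hf : Smooth2 f) (x t : ℝ) :
    HasDerivAt (fun x' => f x' t) (pdx f x t) x := by
  have h := hasDerivAt_fst f hf x t
  have h2 : pdx f x t = fderiv ℝ (Function.uncurry f) (x, t) (1, 0) := h.deriv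
  rw [h2]; exact h

lemma hasDerivAt_pdt (f : ℝ → ℝ → ℝ) (hf : Smooth2 f) (x t : ℝ) :
    HasDerivAt (fun t' => f x t') (pdt f x t) t := by
  have h := hasDerivAt_snd f hf x t
  have h2 : pdt f x t = fderiv ℝ (Function.uncurry f) (x, t) (0, 1) := h.deriv
  rw [h2]; exact h

lemma smooth2_pdx (f : ℝ → ℝ → ℝ) (hf : Smooth2 f) : Smooth2 (pdx f) := by
  have key : Function.uncurry (pdx f) =
      fun p : ℝ × ℝ => fderiv ℝ (Function.uncurry f) p (1, 0) := by
    funext p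
    obtain ⟨x, t⟩ := p
    exact (hasDerivAt_fst f hf x t).deriv
  rw [Smooth2, key]
  exact (hf.fderiv_right (by simp)).clm_apply contDiff_const

lemma smooth2_mDef (f : ℝ → ℝ → ℝ) (hf : Smooth2 f) : Smooth2 (mDef f) := by
  have : Function.uncurry (mDef f) =
      fun p : ℝ × ℝ => Function.uncurry f p - Function.uncurry (pdx (pdx f)) p := rfl
  rw [Smooth2, this]
  exact hf.sub (smooth2_pdx _ (smooth2_pdx _ hf))

/-- If `u, v` is a smooth solution of the Geng–Xue system with `m > 0` and `n > 0`
everywhere, then `q = (m n)^{1/3}` satisfies the conservation law `q_t = (-u v q)_x`. -/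
theorem stmt1 (u v : ℝ → ℝ → ℝ) (hu : Smooth2 u) (hv : Smooth2 v)
    (hgx : GXeq u v)
    (hm : ∀ x t : ℝ, 0 < mDef u x t) (hn : ∀ x t : ℝ, 0 < mDef v x t) :
    ∀ x t : ℝ,
      pdt (fun x' t' => (mDef u x' t' * mDef v x' t') ^ ((1 : ℝ) / 3)) x t =
      pdx (fun x' t' => -(u x' t' * v x' t') *
        (mDef u x' t' * mDef v x' t') ^ ((1 : ℝ) / 3)) x t := by
  intro x t
  have hmS : Smooth2 (mDef u) := smooth2_mDef u hu
  have hnS : Smooth2 (mDef v) := smooth2_mDef v hv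
  have hMN : (0 : ℝ) < mDef u x t * mDef v x t := mul_pos (hm x t) (hn x t)
  have hMNne : mDef u x t * mDef v x t ≠ 0 := ne_of_gt hMN
  -- t-derivatives
  have hmt := hasDerivAt_pdt (mDef u) hmS x t
  have hnt := hasDerivAt_pdt (mDef v) hnS x t
  have hmnt := hmt.mul hnt
  have hQt := hmnt.rpow_const (p := (1 : ℝ) / 3) (Or.inl hMNne)
  -- x-derivatives
  have hmx := hasDerivAt_pdx (mDef u) hmS x t
  have hnx := hasDerivAt_pdx (mDef v) hnS x t
  have hmnx := hmx.mul hnx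
  have hQx := hmnx.rpow_const (p := (1 : ℝ) / 3) (Or.inl hMNne)
  have hux := hasDerivAt_pdx u hu x t
  have hvx := hasDerivAt_pdx v hv x t
  have huv := (hux.mul hvx).neg
  have hRHS := huv.mul hQx
  have hL : pdt (fun x' t' => (mDef u x' t' * mDef v x' t') ^ ((1 : ℝ) / 3)) x t =
      (pdt (mDef u) x t * mDef v x t + mDef u x t * pdt (mDef v) x t) * ((1 : ℝ) / 3) *
        (mDef u x t * mDef v x t) ^ ((1 : ℝ) / 3 - 1) := hQt.deriv
  have hR : pdx (fun x' t' => -(u x' t' * v x' t') *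
        (mDef u x' t' * mDef v x' t') ^ ((1 : ℝ) / 3)) x t =
      -(pdx u x t * v x t + u x t * pdx v x t) *
          (mDef u x t * mDef v x t) ^ ((1 : ℝ) / 3) +
        -(u x t * v x t) *
          ((pdx (mDef u) x t * mDef v x t + mDef u x t * pdx (mDef v) x t) * ((1 : ℝ) / 3) *
            (mDef u x t * mDef v x t) ^ ((1 : ℝ) / 3 - 1)) := hRHS.deriv
  rw [hL, hR]
  have key : (mDef u x t * mDef v x t) *
      (mDef u x t * mDef v x t) ^ ((1 : ℝ) / 3 - 1) =
      (mDef u x t * mDef v x t) ^ ((1 : ℝ) / 3) := by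
    rw [← Real.rpow_one_add' hMN.le (by norm_num)]
    norm_num
  obtain ⟨h1, h2⟩ := hgx x t
  linear_combination
    (mDef v x t * (mDef u x t * mDef v x t) ^ ((1 : ℝ) / 3 - 1) / 3) * h1 +
    (mDef u x t * (mDef u x t * mDef v x t) ^ ((1 : ℝ) / 3 - 1) / 3) * h2 -
    (pdx u x t * v x t + u x t * pdx v x t) * key
end

section
/- Let p, q, u, v : ℝ×ℝ → ℝ be smooth functions of (y,τ) with p and q nowhere zero. Then the zero-curvature equation F(λ)_τ − G(λ)_y + F(λ)G(λ) − G(λ)F(λ) = 0 holds for every real λ ≠ 0 if and only if (p,q,u,v) satisfies the associated Geng–Xue (aGX) system. -/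
open Matrix

/-- The aGX Lax matrix `F(λ)`. -/
noncomputable def Flax (p q : ℝ → ℝ → ℝ) (l y τ : ℝ) : Matrix (Fin 3) (Fin 3) ℝ :=
  !![0, l * p y τ, 1 / q y τ;
     0, 0, l * q y τ / p y τ;
     1 / q y τ, 0, 0]

/-- The aGX Lax matrix `G(λ)`. -/
noncomputable def Glax (q u v : ℝ → ℝ → ℝ) (l y τ : ℝ) : Matrix (Fin 3) (Fin 3) ℝ :=
  !![-(pdx u y τ * v y τ * q y τ), pdx u y τ * q y τ / l,
       u y τ * v y τ + pdx u y τ * pdx v y τ * q y τ ^ 2;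
     v y τ / l, pdx u y τ * v y τ * q y τ - u y τ * pdx v y τ * q y τ - 1 / l ^ 2,
       -(pdx v y τ * q y τ) / l;
     0, u y τ / l, u y τ * pdx v y τ * q y τ]

/-- The associated Geng–Xue (aGX) system. -/
def AGXeq (p q u v : ℝ → ℝ → ℝ) : Prop :=
  ∀ y τ : ℝ,
    pdt p y τ = p y τ * q y τ * (u y τ * pdx v y τ - 2 * pdx u y τ * v y τ) ∧
    pdt q y τ = -(q y τ ^ 2) * pdx (fun y' τ' => u y' τ' * v y' τ') y τ ∧
    pdx (pdx u) y τ * q y τ ^ 2 + pdx u y τ * q y τ * pdx q y τ + p y τ * q y τ - u y τ = 0 ∧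
    pdx (pdx v) y τ * q y τ ^ 2 + q y τ * pdx q y τ * pdx v y τ + q y τ ^ 2 / p y τ - v y τ = 0

theorem Smooth2.hasDerivAt_x {f : ℝ → ℝ → ℝ} (hf : Smooth2 f) (x t : ℝ) :
    HasDerivAt (fun x' => f x' t) (pdx f x t) x := by
  have h : ContDiff ℝ (⊤ : ℕ∞) (fun x' => f x' t) := hf.comp (contDiff_id.prodMk contDiff_const)
  exact (h.differentiable (by simp) x).hasDerivAt

theorem Smooth2.hasDerivAt_t {f : ℝ → ℝ → ℝ} (hf : Smooth2 f) (x t : ℝ) :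
    HasDerivAt (fun t' => f x t') (pdt f x t) t := by
  have h : ContDiff ℝ (⊤ : ℕ∞) (fun t' => f x t') := hf.comp (contDiff_const.prodMk contDiff_id)
  exact (h.differentiable (by simp) t).hasDerivAt

theorem Smooth2.pdx_smooth {f : ℝ → ℝ → ℝ} (hf : Smooth2 f) : Smooth2 (pdx f) := by
  have hd : ∀ x t : ℝ, HasDerivAt (fun x' => f x' t)
      (fderiv ℝ (Function.uncurry f) (x, t) (1, 0)) x := by
    intro x t
    have h1 : HasFDerivAt (Function.uncurry f) (fderiv ℝ (Function.uncurry f) (x, t)) (x, t) :=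
      (hf.differentiable (by simp) (x, t)).hasFDerivAt
    have h2 : HasDerivAt (fun x' : ℝ => (x', t)) ((1:ℝ), (0:ℝ)) x :=
      (hasDerivAt_id x).prodMk (hasDerivAt_const x t)
    exact h1.comp_hasDerivAt x h2
  have he : pdx f = fun x t => fderiv ℝ (Function.uncurry f) (x, t) (1, 0) := by
    funext x t; exact (hd x t).deriv
  rw [Smooth2, he]
  exact (ContinuousLinearMap.apply ℝ ℝ ((1:ℝ),(0:ℝ))).contDiff.comp (hf.fderiv_right (by simp))

/-- `u`-equation expression. -/
noncomputable def aA (p q u : ℝ → ℝ → ℝ) (y τ : ℝ) : ℝ :=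
  pdx (pdx u) y τ * q y τ ^ 2 + pdx u y τ * q y τ * pdx q y τ + p y τ * q y τ - u y τ

/-- `v`-equation expression. -/
noncomputable def aD (p q v : ℝ → ℝ → ℝ) (y τ : ℝ) : ℝ :=
  pdx (pdx v) y τ * q y τ ^ 2 + q y τ * pdx q y τ * pdx v y τ + q y τ ^ 2 / p y τ - v y τ

/-- `p`-equation expression. -/
noncomputable def aB (p q u v : ℝ → ℝ → ℝ) (y τ : ℝ) : ℝ :=
  pdt p y τ - p y τ * q y τ * (u y τ * pdx v y τ - 2 * pdx u y τ * v y τ)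

/-- `q`-equation expression. -/
noncomputable def aC (q u v : ℝ → ℝ → ℝ) (y τ : ℝ) : ℝ :=
  pdt q y τ + q y τ ^ 2 * (pdx u y τ * v y τ + u y τ * pdx v y τ)

set_option maxHeartbeats 2000000 in
theorem zc_iff (p q u v : ℝ → ℝ → ℝ)
    (hp : Smooth2 p) (hq : Smooth2 q) (hu : Smooth2 u) (hv : Smooth2 v)
    (hp0 : ∀ y τ : ℝ, p y τ ≠ 0) (hq0 : ∀ y τ : ℝ, q y τ ≠ 0)
    (l : ℝ) (hl : l ≠ 0) (y τ : ℝ) :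
    ((Matrix.of fun i j : Fin 3 => pdt (fun y' τ' => Flax p q l y' τ' i j) y τ)
        - (Matrix.of fun i j : Fin 3 => pdx (fun y' τ' => Glax q u v l y' τ' i j) y τ)
        + Flax p q l y τ * Glax q u v l y τ - Glax q u v l y τ * Flax p q l y τ = 0)
    ↔ (v y τ * aA p q u y τ / q y τ = 0 ∧
       -(aA p q u y τ) / (q y τ * l) + l * aB p q u v y τ = 0 ∧
       -(aC q u v y τ) / q y τ ^ 2 - pdx v y τ * aA p q u y τ - pdx u y τ * aD p q v y τ = 0 ∧
       (u y τ * aD p q v y τ - v y τ * aA p q u y τ) / q y τ = 0 ∧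
       aD p q v y τ / (q y τ * l) + l * aC q u v y τ / p y τ
         - l * q y τ * aB p q u v y τ / p y τ ^ 2 = 0 ∧
       -(aC q u v y τ) / q y τ ^ 2 = 0 ∧
       -(u y τ * aD p q v y τ) / q y τ = 0) := by
  have hP0 := hp0 y τ
  have hQ0 := hq0 y τ
  have hPt : HasDerivAt (fun τ' => p y τ') (pdt p y τ) τ := hp.hasDerivAt_t y τ
  have hQt : HasDerivAt (fun τ' => q y τ') (pdt q y τ) τ := hq.hasDerivAt_t y τ
  have hUx : HasDerivAt (fun y' => u y' τ) (pdx u y τ) y := hu.hasDerivAt_x y τ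
  have hVx : HasDerivAt (fun y' => v y' τ) (pdx v y τ) y := hv.hasDerivAt_x y τ
  have hQx : HasDerivAt (fun y' => q y' τ) (pdx q y τ) y := hq.hasDerivAt_x y τ
  have hUyx : HasDerivAt (fun y' => pdx u y' τ) (pdx (pdx u) y τ) y :=
    hu.pdx_smooth.hasDerivAt_x y τ
  have hVyx : HasDerivAt (fun y' => pdx v y' τ) (pdx (pdx v) y τ) y :=
    hv.pdx_smooth.hasDerivAt_x y τ
  -- τ-derivatives of the entries of F
  have dF00 : pdt (fun _ _ : ℝ => (0:ℝ)) y τ = 0 := (hasDerivAt_const τ (0:ℝ)).deriv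
  have dF01 : pdt (fun y' τ' => l * p y' τ') y τ = l * pdt p y τ := (hPt.const_mul l).deriv
  have dF02 : pdt (fun y' τ' => 1 / q y' τ') y τ
      = (0 * q y τ - 1 * pdt q y τ) / q y τ ^ 2 :=
    ((hasDerivAt_const τ (1:ℝ)).div hQt hQ0).deriv
  have dF12 : pdt (fun y' τ' => l * q y' τ' / p y' τ') y τ
      = (l * pdt q y τ * p y τ - l * q y τ * pdt p y τ) / p y τ ^ 2 :=
    ((hQt.const_mul l).div hPt hP0).deriv
  -- y-derivatives of the entries of G
  have dG00 : pdx (fun y' τ' => -(pdx u y' τ' * v y' τ' * q y' τ')) y τ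
      = -((pdx (pdx u) y τ * v y τ + pdx u y τ * pdx v y τ) * q y τ
          + pdx u y τ * v y τ * pdx q y τ) :=
    (((hUyx.mul hVx).mul hQx).neg).deriv
  have dG01 : pdx (fun y' τ' => pdx u y' τ' * q y' τ' / l) y τ
      = (pdx (pdx u) y τ * q y τ + pdx u y τ * pdx q y τ) / l :=
    ((hUyx.mul hQx).div_const l).deriv
  have dG02 : pdx (fun y' τ' => u y' τ' * v y' τ' + pdx u y' τ' * pdx v y' τ' * q y' τ' ^ 2) y τ
      = (pdx u y τ * v y τ + u y τ * pdx v y τ)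
        + ((pdx (pdx u) y τ * pdx v y τ + pdx u y τ * pdx (pdx v) y τ) * q y τ ^ 2
           + pdx u y τ * pdx v y τ * (((2:ℕ):ℝ) * q y τ ^ (2 - 1) * pdx q y τ)) :=
    ((hUx.mul hVx).add ((hUyx.mul hVyx).mul (hQx.pow 2))).deriv
  have dG10 : pdx (fun y' τ' => v y' τ' / l) y τ = pdx v y τ / l := (hVx.div_const l).deriv
  have dG11 : pdx (fun y' τ' =>
        pdx u y' τ' * v y' τ' * q y' τ' - u y' τ' * pdx v y' τ' * q y' τ' - 1 / l ^ 2) y τ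
      = ((pdx (pdx u) y τ * v y τ + pdx u y τ * pdx v y τ) * q y τ
          + pdx u y τ * v y τ * pdx q y τ)
        - ((pdx u y τ * pdx v y τ + u y τ * pdx (pdx v) y τ) * q y τ
           + u y τ * pdx v y τ * pdx q y τ) :=
    ((((hUyx.mul hVx).mul hQx).sub ((hUx.mul hVyx).mul hQx)).sub_const (1 / l ^ 2)).deriv
  have dG12 : pdx (fun y' τ' => -(pdx v y' τ' * q y' τ') / l) y τ
      = -(pdx (pdx v) y τ * q y τ + pdx v y τ * pdx q y τ) / l :=
    (((hVyx.mul hQx).neg).div_const l).deriv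
  have dG20 : pdx (fun _ _ : ℝ => (0:ℝ)) y τ = 0 := (hasDerivAt_const y (0:ℝ)).deriv
  have dG21 : pdx (fun y' τ' => u y' τ' / l) y τ = pdx u y τ / l := (hUx.div_const l).deriv
  have dG22 : pdx (fun y' τ' => u y' τ' * pdx v y' τ' * q y' τ') y τ
      = (pdx u y τ * pdx v y τ + u y τ * pdx (pdx v) y τ) * q y τ
        + u y τ * pdx v y τ * pdx q y τ :=
    ((hUx.mul hVyx).mul hQx).deriv
  set M : Matrix (Fin 3) (Fin 3) ℝ :=
    (Matrix.of fun i j : Fin 3 => pdt (fun y' τ' => Flax p q l y' τ' i j) y τ)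
      - (Matrix.of fun i j : Fin 3 => pdx (fun y' τ' => Glax q u v l y' τ' i j) y τ)
      + Flax p q l y τ * Glax q u v l y τ - Glax q u v l y τ * Flax p q l y τ with hM
  have E00 : M 0 0 = v y τ * aA p q u y τ / q y τ := by
    rw [hM]
    simp only [Matrix.sub_apply, Matrix.add_apply, Matrix.of_apply, Matrix.mul_apply,
      Fin.sum_univ_three, Flax, Glax, Matrix.cons_val', Matrix.cons_val_zero, Matrix.cons_val_one,
      Matrix.head_cons, Matrix.cons_val_two, Matrix.tail_cons, Matrix.empty_val',
      Matrix.cons_val_fin_one, Matrix.head_fin_const]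
    rw [dF00, dG00]
    simp only [aA]
    field_simp
    ring
  have E01 : M 0 1 = -(aA p q u y τ) / (q y τ * l) + l * aB p q u v y τ := by
    rw [hM]
    simp only [Matrix.sub_apply, Matrix.add_apply, Matrix.of_apply, Matrix.mul_apply,
      Fin.sum_univ_three, Flax, Glax, Matrix.cons_val', Matrix.cons_val_zero, Matrix.cons_val_one,
      Matrix.head_cons, Matrix.cons_val_two, Matrix.tail_cons, Matrix.empty_val',
      Matrix.cons_val_fin_one, Matrix.head_fin_const]
    rw [dF01, dG01]
    simp only [aA, aB]
    field_simp
    ring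
  have E02 : M 0 2 = -(aC q u v y τ) / q y τ ^ 2 - pdx v y τ * aA p q u y τ
      - pdx u y τ * aD p q v y τ := by
    rw [hM]
    simp only [Matrix.sub_apply, Matrix.add_apply, Matrix.of_apply, Matrix.mul_apply,
      Fin.sum_univ_three, Flax, Glax, Matrix.cons_val', Matrix.cons_val_zero, Matrix.cons_val_one,
      Matrix.head_cons, Matrix.cons_val_two, Matrix.tail_cons, Matrix.empty_val',
      Matrix.cons_val_fin_one, Matrix.head_fin_const]
    rw [dF02, dG02]
    simp only [aA, aC, aD]
    field_simp
    ring
  have E10 : M 1 0 = 0 := by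
    rw [hM]
    simp only [Matrix.sub_apply, Matrix.add_apply, Matrix.of_apply, Matrix.mul_apply,
      Fin.sum_univ_three, Flax, Glax, Matrix.cons_val', Matrix.cons_val_zero, Matrix.cons_val_one,
      Matrix.head_cons, Matrix.cons_val_two, Matrix.tail_cons, Matrix.empty_val',
      Matrix.cons_val_fin_one, Matrix.head_fin_const]
    rw [dF00, dG10]
    field_simp
    ring
  have E11 : M 1 1 = (u y τ * aD p q v y τ - v y τ * aA p q u y τ) / q y τ := by
    rw [hM]
    simp only [Matrix.sub_apply, Matrix.add_apply, Matrix.of_apply, Matrix.mul_apply,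
      Fin.sum_univ_three, Flax, Glax, Matrix.cons_val', Matrix.cons_val_zero, Matrix.cons_val_one,
      Matrix.head_cons, Matrix.cons_val_two, Matrix.tail_cons, Matrix.empty_val',
      Matrix.cons_val_fin_one, Matrix.head_fin_const]
    rw [dF00, dG11]
    simp only [aA, aD]
    field_simp
    ring
  have E12 : M 1 2 = aD p q v y τ / (q y τ * l) + l * aC q u v y τ / p y τ
      - l * q y τ * aB p q u v y τ / p y τ ^ 2 := by
    rw [hM]
    simp only [Matrix.sub_apply, Matrix.add_apply, Matrix.of_apply, Matrix.mul_apply,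
      Fin.sum_univ_three, Flax, Glax, Matrix.cons_val', Matrix.cons_val_zero, Matrix.cons_val_one,
      Matrix.head_cons, Matrix.cons_val_two, Matrix.tail_cons, Matrix.empty_val',
      Matrix.cons_val_fin_one, Matrix.head_fin_const]
    rw [dF12, dG12]
    simp only [aB, aC, aD]
    field_simp
    ring
  have E20 : M 2 0 = -(aC q u v y τ) / q y τ ^ 2 := by
    rw [hM]
    simp only [Matrix.sub_apply, Matrix.add_apply, Matrix.of_apply, Matrix.mul_apply,
      Fin.sum_univ_three, Flax, Glax, Matrix.cons_val', Matrix.cons_val_zero, Matrix.cons_val_one,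
      Matrix.head_cons, Matrix.cons_val_two, Matrix.tail_cons, Matrix.empty_val',
      Matrix.cons_val_fin_one, Matrix.head_fin_const]
    rw [dF02, dG20]
    simp only [aC]
    field_simp
    ring
  have E21 : M 2 1 = 0 := by
    rw [hM]
    simp only [Matrix.sub_apply, Matrix.add_apply, Matrix.of_apply, Matrix.mul_apply,
      Fin.sum_univ_three, Flax, Glax, Matrix.cons_val', Matrix.cons_val_zero, Matrix.cons_val_one,
      Matrix.head_cons, Matrix.cons_val_two, Matrix.tail_cons, Matrix.empty_val',
      Matrix.cons_val_fin_one, Matrix.head_fin_const]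
    rw [dF00, dG21]
    field_simp
    ring
  have E22 : M 2 2 = -(u y τ * aD p q v y τ) / q y τ := by
    rw [hM]
    simp only [Matrix.sub_apply, Matrix.add_apply, Matrix.of_apply, Matrix.mul_apply,
      Fin.sum_univ_three, Flax, Glax, Matrix.cons_val', Matrix.cons_val_zero, Matrix.cons_val_one,
      Matrix.head_cons, Matrix.cons_val_two, Matrix.tail_cons, Matrix.empty_val',
      Matrix.cons_val_fin_one, Matrix.head_fin_const]
    rw [dF00, dG22]
    simp only [aD]
    field_simp
    ring
  constructor
  · intro h
    refine ⟨?_, ?_, ?_, ?_, ?_, ?_, ?_⟩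
    · rw [← E00]; exact congrFun (congrFun h 0) 0
    · rw [← E01]; exact congrFun (congrFun h 0) 1
    · rw [← E02]; exact congrFun (congrFun h 0) 2
    · rw [← E11]; exact congrFun (congrFun h 1) 1
    · rw [← E12]; exact congrFun (congrFun h 1) 2
    · rw [← E20]; exact congrFun (congrFun h 2) 0
    · rw [← E22]; exact congrFun (congrFun h 2) 2
  · rintro ⟨h1, h2, h3, h4, h5, h6, h7⟩
    ext i j
    fin_cases i <;> fin_cases j
    · exact E00.trans h1
    · exact E01.trans h2
    · exact E02.trans h3
    · exact E10
    · exact E11.trans h4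
    · exact E12.trans h5
    · exact E20.trans h6
    · exact E21
    · exact E22.trans h7

/-- The zero-curvature equation `F_τ - G_y + F G - G F = 0` holds for all `λ ≠ 0`
iff `(p, q, u, v)` solves the aGX system. -/
theorem stmt3 (p q u v : ℝ → ℝ → ℝ)
    (hp : Smooth2 p) (hq : Smooth2 q) (hu : Smooth2 u) (hv : Smooth2 v)
    (hp0 : ∀ y τ : ℝ, p y τ ≠ 0) (hq0 : ∀ y τ : ℝ, q y τ ≠ 0) :
    (∀ l : ℝ, l ≠ 0 → ∀ y τ : ℝ,
      (Matrix.of fun i j : Fin 3 => pdt (fun y' τ' => Flax p q l y' τ' i j) y τ)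
        - (Matrix.of fun i j : Fin 3 => pdx (fun y' τ' => Glax q u v l y' τ' i j) y τ)
        + Flax p q l y τ * Glax q u v l y τ - Glax q u v l y τ * Flax p q l y τ = 0)
    ↔ AGXeq p q u v := by
  have hUV : ∀ y τ : ℝ, pdx (fun y' τ' => u y' τ' * v y' τ') y τ
      = pdx u y τ * v y τ + u y τ * pdx v y τ :=
    fun y τ => ((hu.hasDerivAt_x y τ).mul (hv.hasDerivAt_x y τ)).deriv
  constructor
  · intro h y τ
    have e1 := (zc_iff p q u v hp hq hu hv hp0 hq0 1 one_ne_zero y τ).1 (h 1 one_ne_zero y τ)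
    have e2 := (zc_iff p q u v hp hq hu hv hp0 hq0 2 two_ne_zero y τ).1 (h 2 two_ne_zero y τ)
    have hB : aB p q u v y τ = 0 := by
      linear_combination (2/3 : ℝ) * e2.2.1 - (1/3 : ℝ) * e1.2.1
    have hAQ : aA p q u y τ / q y τ = 0 := by
      linear_combination hB - e1.2.1
    have hA : aA p q u y τ = 0 := by
      rcases div_eq_zero_iff.1 hAQ with h' | h'
      · exact h'
      · exact absurd h' (hq0 y τ)
    have hCQ : aC q u v y τ / q y τ ^ 2 = 0 := by
      linear_combination -e1.2.2.2.2.2.1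
    have hC : aC q u v y τ = 0 := by
      rcases div_eq_zero_iff.1 hCQ with h' | h'
      · exact h'
      · exact absurd h' (pow_ne_zero 2 (hq0 y τ))
    have hDQ : aD p q v y τ / q y τ = 0 := by
      linear_combination e1.2.2.2.2.1 - (1 / p y τ) * hC + (q y τ / p y τ ^ 2) * hB
    have hD : aD p q v y τ = 0 := by
      rcases div_eq_zero_iff.1 hDQ with h' | h'
      · exact h'
      · exact absurd h' (hq0 y τ)
    refine ⟨?_, ?_, hA, hD⟩
    · simp only [aB] at hB; linear_combination hB
    · rw [hUV]; simp only [aC] at hC; linear_combination hC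
  · intro hAGX l hl y τ
    obtain ⟨g1, g2, g3, g4⟩ := hAGX y τ
    have hA : aA p q u y τ = 0 := g3
    have hD : aD p q v y τ = 0 := g4
    have hB : aB p q u v y τ = 0 := by unfold aB; linear_combination g1
    have hC : aC q u v y τ = 0 := by unfold aC; rw [g2, hUV]; ring
    rw [zc_iff p q u v hp hq hu hv hp0 hq0 l hl y τ]
    rw [hA, hB, hC, hD]
    norm_num
end
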